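/- arXiv:2402.03564 — 5 statements merged into one kernel-verified Lean document; each statement's English description precedes it below -/
import Mathlib

section
/- For all costs c₁ ≥ 0 with λ·(c₁ + E[S'_{<T}]) < 1, the SkipPredict server-cost mean response time formula for predicted short jobs dominates the external-cost one: M^{PS}_{ext} ≤ M^{PS}_{srv}. -/
open MeasureTheory Set Filter

theorem stmt_6
    (f pT : ℝ → ℝ) (lam c₁ : ℝ)
    (hf_meas : Measurable f) (hf_nonneg : ∀ x, 0 ≤ f x)
    (hf_int : IntegrableOn f (Ioi 0))
    (hf_one : (∫ x in Ioi (0:ℝ), f x) = 1)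
    (hf_mom1 : IntegrableOn (fun x => x * f x) (Ioi 0))
    (hf_mom2 : IntegrableOn (fun x => x ^ 2 * f x) (Ioi 0))
    (hp_meas : Measurable pT) (hp0 : ∀ x, 0 ≤ pT x) (hp1 : ∀ x, pT x ≤ 1)
    (hlam : 0 < lam) (hc₁ : 0 ≤ c₁)
    (hstab : lam * (c₁ + (∫ x in Ioi (0:ℝ), x * pT x * f x)) < 1)
    (MPSext MPSsrv : ℝ)
    (hMPSext : MPSext = lam * (∫ x in Ioi (0:ℝ), x ^ 2 * pT x * f x) / (2 * (1 - lam * (∫ x in Ioi (0:ℝ), x * pT x * f x))) + (∫ x in Ioi (0:ℝ), x * pT x * f x))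
    (hMPSsrv : MPSsrv = lam * (c₁ ^ 2 + 2 * c₁ * (∫ x in Ioi (0:ℝ), x * pT x * f x) + (∫ x in Ioi (0:ℝ), x ^ 2 * pT x * f x))
      / (2 * (1 - lam * (c₁ + (∫ x in Ioi (0:ℝ), x * pT x * f x)))) + (∫ x in Ioi (0:ℝ), x * pT x * f x)) :
    MPSext ≤ MPSsrv := by
  set E1 := (∫ x in Ioi (0:ℝ), x * pT x * f x) with hE1
  set E2 := (∫ x in Ioi (0:ℝ), x ^ 2 * pT x * f x) with hE2
  have hE1nn : 0 ≤ E1 := setIntegral_nonneg measurableSet_Ioi (fun x hx =>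
    mul_nonneg (mul_nonneg (le_of_lt hx) (hp0 x)) (hf_nonneg x))
  have hE2nn : 0 ≤ E2 := setIntegral_nonneg measurableSet_Ioi (fun x hx =>
    mul_nonneg (mul_nonneg (sq_nonneg x) (hp0 x)) (hf_nonneg x))
  have hDsrv : 0 < 1 - lam * (c₁ + E1) := by linarith
  have hDext : 1 - lam * (c₁ + E1) ≤ 1 - lam * E1 := by nlinarith
  rw [hMPSext, hMPSsrv]
  have h1 : lam * E2 ≤ lam * (c₁ ^ 2 + 2 * c₁ * E1 + E2) := by nlinarith
  have h2 : lam * E2 / (2 * (1 - lam * E1)) ≤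
      lam * (c₁ ^ 2 + 2 * c₁ * E1 + E2) / (2 * (1 - lam * (c₁ + E1))) :=
    div_le_div₀ (by nlinarith) h1 (by linarith) (by linarith)
  linarith
end

section
/- Fix r ≥ 0 and costs c₁, c₂ ≥ 0, and assume the server-cost stability condition ρ^{srv}_r < 1. Then for every x_J ≥ 0, the SkipPredict server-cost mean response time formula for predicted long jobs dominates the external-cost one: M^{PL}_{ext}(x_J, r) ≤ M^{PL}_{srv}(x_J, r). -/
/-!
Charging prediction costs to the server adds the same load for every threshold: each job pays
`c₁` and each long job another `c₂`, so for `t ≥ 0`,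
`ρ^{srv}_t = ρ^{ext}_t + λ (c₁ P(short) + (c₁ + c₂) P(long))`.
Hence `ρ^{ext} ≤ ρ^{srv}` and `ρ^{srv}` is monotone on `[0, ∞)` like `ρ^{ext}`. Both terms of the
response-time formula increase with the load, and the second-moment term also increases with
the job sizes, since `(x + c)² ≥ x²` for `x, c ≥ 0`.
-/

open MeasureTheory Set

namespace MeasureTheory

theorem IntegrableOn.mul_of_nonneg_of_le_one {α : Type*} [MeasurableSpace α] {μ : Measure α}
    {s : Set α} {w h : α → ℝ} (hh : IntegrableOn h s μ) (hw : Measurable w)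
    (hw0 : ∀ a, 0 ≤ w a) (hw1 : ∀ a, w a ≤ 1) :
    IntegrableOn (fun a => w a * h a) s μ :=
  hh.bdd_mul hw.aestronglyMeasurable (ae_of_all _ fun a => by
    rw [Real.norm_eq_abs, abs_of_nonneg (hw0 a)]; exact hw1 a)

section Prod

variable {α β E : Type*} [MeasurableSpace α] [MeasurableSpace β] {μ : Measure α} {ν : Measure β}
  [SFinite μ] [SFinite ν] [NormedAddCommGroup E] [NormedSpace ℝ E] {s : Set α} {t : Set β}

theorem setIntegral_setIntegral_eq_setIntegral_prod {F : α → β → E}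
    (hF : IntegrableOn (Function.uncurry F) (s ×ˢ t) (μ.prod ν)) :
    ∫ y in t, ∫ x in s, F x y ∂μ ∂ν = ∫ q in s ×ˢ t, Function.uncurry F q ∂μ.prod ν := by
  rw [IntegrableOn, ← Measure.prod_restrict] at hF
  rw [← Measure.prod_restrict]
  exact (integral_prod_symm _ hF).symm

theorem IntegrableOn.setIntegral_prod_right {F : α → β → E}
    (hF : IntegrableOn (Function.uncurry F) (s ×ˢ t) (μ.prod ν)) :
    IntegrableOn (fun y => ∫ x in s, F x y ∂μ) t ν := by
  rw [IntegrableOn, ← Measure.prod_restrict] at hF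
  exact hF.integral_prod_right

theorem setIntegral_setIntegral_add_const_mul {F G : α → β → ℝ}
    (hF : IntegrableOn (Function.uncurry F) (s ×ˢ t) (μ.prod ν))
    (hG : IntegrableOn (Function.uncurry G) (s ×ˢ t) (μ.prod ν)) (c : ℝ) :
    ∫ y in t, ∫ x in s, (F x y + c * G x y) ∂μ ∂ν
      = ∫ y in t, ∫ x in s, F x y ∂μ ∂ν + c * ∫ y in t, ∫ x in s, G x y ∂μ ∂ν := by
  rw [setIntegral_setIntegral_eq_setIntegral_prod (F := fun x y => F x y + c * G x y)
      (hF.add (hG.const_mul c)), setIntegral_setIntegral_eq_setIntegral_prod hF,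
    setIntegral_setIntegral_eq_setIntegral_prod hG, ← integral_const_mul,
    ← integral_add hF (hG.const_mul c)]
  rfl

theorem setIntegral_setIntegral_mono {F G : α → β → ℝ}
    (hF : IntegrableOn (Function.uncurry F) (s ×ˢ t) (μ.prod ν))
    (hG : IntegrableOn (Function.uncurry G) (s ×ˢ t) (μ.prod ν))
    (hs : MeasurableSet s) (ht : MeasurableSet t) (h : ∀ x ∈ s, ∀ y ∈ t, F x y ≤ G x y) :
    ∫ y in t, ∫ x in s, F x y ∂μ ∂ν ≤ ∫ y in t, ∫ x in s, G x y ∂μ ∂ν := by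
  rw [setIntegral_setIntegral_eq_setIntegral_prod hF,
    setIntegral_setIntegral_eq_setIntegral_prod hG]
  exact setIntegral_mono_on hF hG (hs.prod ht) fun q hq => h _ hq.1 _ hq.2

end Prod

theorem setIntegral_Ioc_add_setIntegral_Ioi {E : Type*} [NormedAddCommGroup E] [NormedSpace ℝ E]
    {φ : ℝ → E} {a b : ℝ} (hab : a ≤ b) (hφ : IntegrableOn φ (Ioi a)) :
    (∫ x in Ioc a b, φ x) + ∫ x in Ioi b, φ x = ∫ x in Ioi a, φ x := by
  rw [← setIntegral_union (Ioc_disjoint_Ioi le_rfl) measurableSet_Ioi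
    (hφ.mono_set Ioc_subset_Ioi_self) (hφ.mono_set (Ioi_subset_Ioi hab)),
    Ioc_union_Ioi_eq_Ioi hab]

theorem monotone_setIntegral_Ioc_setIntegral {α : Type*} [MeasurableSpace α] {μ : Measure α}
    [SFinite μ] {F : α → ℝ → ℝ} {s : Set α}
    (hF : IntegrableOn (Function.uncurry F) (s ×ˢ Ioi 0) (μ.prod volume)) (hs : MeasurableSet s)
    (hF0 : ∀ x ∈ s, ∀ y, 0 ≤ F x y) :
    Monotone fun t => ∫ y in Ioc 0 t, ∫ x in s, F x y ∂μ := fun _ _ hab =>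
  setIntegral_mono_set (hF.setIntegral_prod_right.mono_set Ioc_subset_Ioi_self)
    (ae_of_all _ fun y => setIntegral_nonneg hs fun x hx => hF0 x hx y)
    (Ioc_subset_Ioc_right hab).eventuallyLE

end MeasureTheory

theorem integrableOn_one_div_one_sub_comp_max {ρ : ℝ → ℝ} {r : ℝ}
    (hρ : MonotoneOn ρ (Ici 0)) (hr : 0 ≤ r) (hρr : ρ r < 1) (x : ℝ) :
    IntegrableOn (fun u => 1 / (1 - ρ (max (r - u) 0))) (Ioc 0 x) := by
  refine (AntitoneOn.integrableOn_isCompact isCompact_Icc ?_).mono_set Ioc_subset_Icc_self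
  have hmem : ∀ u, max (r - u) 0 ∈ Ici 0 := fun u => mem_Ici.2 (le_max_right _ _)
  intro u hu v hv huv
  have hu_lt : ρ (max (r - u) 0) < 1 :=
    (hρ (hmem u) hr (max_le (by linarith [hu.1]) hr)).trans_lt hρr
  exact one_div_le_one_div_of_le (sub_pos.2 hu_lt)
    (sub_le_sub_left (hρ (hmem v) (hmem u) (max_le_max (by linarith) le_rfl)) 1)

theorem responseTime_le_of_load_le {lam r x Ne Ns : ℝ} {ρe ρs : ℝ → ℝ} (hlam : 0 ≤ lam)
    (hr : 0 ≤ r) (hρe : MonotoneOn ρe (Ici 0)) (hρs : MonotoneOn ρs (Ici 0))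
    (hρes : ∀ t ≥ 0, ρe t ≤ ρs t) (hρs1 : ρs r < 1) (hNe : 0 ≤ Ne) (hN : Ne ≤ Ns) :
    lam / (2 * (1 - ρe r) ^ 2) * Ne + ∫ u in Ioc 0 x, 1 / (1 - ρe (max (r - u) 0))
      ≤ lam / (2 * (1 - ρs r) ^ 2) * Ns + ∫ u in Ioc 0 x, 1 / (1 - ρs (max (r - u) 0)) := by
  have hρer : ρe r ≤ ρs r := hρes r hr
  gcongr ?_ * ?_ + ?_
  · have : 0 < 1 - ρs r := sub_pos.2 hρs1
    gcongr
  · refine setIntegral_mono_on (integrableOn_one_div_one_sub_comp_max hρe hr (hρer.trans_lt hρs1) x)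
      (integrableOn_one_div_one_sub_comp_max hρs hr hρs1 x) measurableSet_Ioc fun u hu => ?_
    have hmax : max (r - u) 0 ≤ r := max_le (by linarith [hu.1]) hr
    have hu_lt : ρs (max (r - u) 0) < 1 :=
      (hρs (mem_Ici.2 (le_max_right _ _)) hr hmax).trans_lt hρs1
    exact one_div_le_one_div_of_le (sub_pos.2 hu_lt) (sub_le_sub_left (hρes _ (le_max_right _ _)) 1)

noncomputable def extLoad (f pT : ℝ → ℝ) (g : ℝ → ℝ → ℝ) (lam r : ℝ) : ℝ :=
  lam * ((∫ x in Ioi 0, x * pT x * f x) + ∫ y in Ioc 0 r, ∫ x in Ioi 0, (1 - pT x) * x * g x y)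

noncomputable def srvLoad (f pT : ℝ → ℝ) (g : ℝ → ℝ → ℝ) (lam c₁ c₂ r : ℝ) : ℝ :=
  lam * ((∫ x in Ioi 0, (x + c₁) * pT x * f x)
    + (c₁ + c₂) * (∫ y in Ioi r, ∫ x in Ioi 0, (1 - pT x) * g x y)
    + ∫ y in Ioc 0 r, ∫ x in Ioi 0, (1 - pT x) * (x + (c₁ + c₂)) * g x y)

noncomputable def meanPredictionCost (f pT : ℝ → ℝ) (g : ℝ → ℝ → ℝ) (c₁ c₂ : ℝ) : ℝ :=
  c₁ * (∫ x in Ioi 0, pT x * f x) + (c₁ + c₂) * ∫ y in Ioi 0, ∫ x in Ioi 0, (1 - pT x) * g x y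

section SkipPredict

variable {f pT : ℝ → ℝ} {g : ℝ → ℝ → ℝ}

theorem integrableOn_short_moments (hp_meas : Measurable pT) (hp0 : ∀ x, 0 ≤ pT x)
    (hp1 : ∀ x, pT x ≤ 1) {s : Set ℝ} (hf : IntegrableOn f s)
    (hf1 : IntegrableOn (fun x => x * f x) s) (hf2 : IntegrableOn (fun x => x ^ 2 * f x) s) :
    IntegrableOn (fun x => pT x * f x) s ∧ IntegrableOn (fun x => x * pT x * f x) s
      ∧ IntegrableOn (fun x => x ^ 2 * pT x * f x) s :=
  ⟨hf.mul_of_nonneg_of_le_one hp_meas hp0 hp1,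
    (hf1.mul_of_nonneg_of_le_one hp_meas hp0 hp1).congr (ae_of_all _ fun x => by ring),
    (hf2.mul_of_nonneg_of_le_one hp_meas hp0 hp1).congr (ae_of_all _ fun x => by ring)⟩

theorem integrableOn_long_moments (hp_meas : Measurable pT) (hp0 : ∀ x, 0 ≤ pT x)
    (hp1 : ∀ x, pT x ≤ 1) {S : Set (ℝ × ℝ)}
    (hg0 : IntegrableOn (fun q : ℝ × ℝ => g q.1 q.2) S)
    (hg1 : IntegrableOn (fun q : ℝ × ℝ => q.1 * g q.1 q.2) S)
    (hg2 : IntegrableOn (fun q : ℝ × ℝ => q.1 ^ 2 * g q.1 q.2) S) :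
    IntegrableOn (Function.uncurry fun x y => (1 - pT x) * g x y) S
      ∧ IntegrableOn (Function.uncurry fun x y => (1 - pT x) * x * g x y) S
      ∧ IntegrableOn (Function.uncurry fun x y => (1 - pT x) * x ^ 2 * g x y) S := by
  have hw : Measurable fun q : ℝ × ℝ => 1 - pT q.1 := (hp_meas.comp measurable_fst).const_sub 1
  have hw0 : ∀ q : ℝ × ℝ, 0 ≤ 1 - pT q.1 := fun q => sub_nonneg.2 (hp1 q.1)
  have hw1 : ∀ q : ℝ × ℝ, 1 - pT q.1 ≤ 1 := fun q => sub_le_self 1 (hp0 q.1)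
  exact ⟨hg0.mul_of_nonneg_of_le_one hw hw0 hw1,
    (hg1.mul_of_nonneg_of_le_one hw hw0 hw1).congr (ae_of_all _ fun _ => (mul_assoc _ _ _).symm),
    (hg2.mul_of_nonneg_of_le_one hw hw0 hw1).congr (ae_of_all _ fun _ => (mul_assoc _ _ _).symm)⟩

theorem meanPredictionCost_nonneg {c₁ c₂ : ℝ} (hc₁ : 0 ≤ c₁) (hc₂ : 0 ≤ c₂)
    (hp0 : ∀ x, 0 ≤ pT x) (hp1 : ∀ x, pT x ≤ 1) (hf0 : ∀ x, 0 ≤ f x) (hg0 : ∀ x y, 0 ≤ g x y) :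
    0 ≤ meanPredictionCost f pT g c₁ c₂ := by
  have hshort : 0 ≤ ∫ x in Ioi 0, pT x * f x :=
    setIntegral_nonneg measurableSet_Ioi fun x _ => mul_nonneg (hp0 x) (hf0 x)
  have hlong : 0 ≤ ∫ y in Ioi 0, ∫ x in Ioi 0, (1 - pT x) * g x y :=
    setIntegral_nonneg measurableSet_Ioi fun y _ => setIntegral_nonneg measurableSet_Ioi
      fun x _ => mul_nonneg (sub_nonneg.2 (hp1 x)) (hg0 x y)
  exact add_nonneg (mul_nonneg hc₁ hshort) (mul_nonneg (add_nonneg hc₁ hc₂) hlong)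

theorem monotone_extLoad {lam : ℝ} (hlam : 0 ≤ lam) (hp1 : ∀ x, pT x ≤ 1)
    (hg0 : ∀ x y, 0 ≤ g x y)
    (hH1 : IntegrableOn (Function.uncurry fun x y => (1 - pT x) * x * g x y) (Ioi 0 ×ˢ Ioi 0)) :
    Monotone (extLoad f pT g lam) := fun _ _ hab =>
  mul_le_mul_of_nonneg_left (add_le_add_right (monotone_setIntegral_Ioc_setIntegral hH1
    measurableSet_Ioi (fun x hx y => mul_nonneg (mul_nonneg (sub_nonneg.2 (hp1 x))
      (mem_Ioi.1 hx).le) (hg0 x y)) hab) _) hlam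

theorem srvLoad_eq_extLoad_add {lam c₁ c₂ t : ℝ}
    (hpf : IntegrableOn (fun x => pT x * f x) (Ioi 0))
    (hxpf : IntegrableOn (fun x => x * pT x * f x) (Ioi 0))
    (hH0 : IntegrableOn (Function.uncurry fun x y => (1 - pT x) * g x y) (Ioi 0 ×ˢ Ioi 0))
    (hH1 : IntegrableOn (Function.uncurry fun x y => (1 - pT x) * x * g x y) (Ioi 0 ×ˢ Ioi 0))
    (ht : 0 ≤ t) :
    srvLoad f pT g lam c₁ c₂ t = extLoad f pT g lam t + lam * meanPredictionCost f pT g c₁ c₂ := by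
  have hshort : ∫ x in Ioi 0, (x + c₁) * pT x * f x
      = (∫ x in Ioi 0, x * pT x * f x) + c₁ * ∫ x in Ioi 0, pT x * f x := by
    rw [← integral_const_mul, ← integral_add hxpf (hpf.const_mul c₁)]
    congr 1 with x
    ring
  have hsub : Ioi (0 : ℝ) ×ˢ Ioc 0 t ⊆ Ioi 0 ×ˢ Ioi 0 := prod_mono subset_rfl Ioc_subset_Ioi_self
  have hlong : ∫ y in Ioc 0 t, ∫ x in Ioi 0, (1 - pT x) * (x + (c₁ + c₂)) * g x y
      = (∫ y in Ioc 0 t, ∫ x in Ioi 0, (1 - pT x) * x * g x y)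
        + (c₁ + c₂) * ∫ y in Ioc 0 t, ∫ x in Ioi 0, (1 - pT x) * g x y := by
    rw [← setIntegral_setIntegral_add_const_mul (hH1.mono_set hsub) (hH0.mono_set hsub)]
    congr 1 with y
    congr 1 with x
    ring
  have hsplit := setIntegral_Ioc_add_setIntegral_Ioi ht hH0.setIntegral_prod_right
  unfold srvLoad extLoad meanPredictionCost
  rw [hshort, hlong, ← hsplit]
  ring

theorem secondMoment_le {c₁ c r : ℝ} (hc₁ : 0 ≤ c₁) (hc : 0 ≤ c)
    (hp0 : ∀ x, 0 ≤ pT x) (hp1 : ∀ x, pT x ≤ 1) (hf0 : ∀ x, 0 ≤ f x) (hg0 : ∀ x y, 0 ≤ g x y)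
    (hpf : IntegrableOn (fun x => pT x * f x) (Ioi 0))
    (hxpf : IntegrableOn (fun x => x * pT x * f x) (Ioi 0))
    (hx2pf : IntegrableOn (fun x => x ^ 2 * pT x * f x) (Ioi 0))
    (hH0 : IntegrableOn (Function.uncurry fun x y => (1 - pT x) * g x y) (Ioi 0 ×ˢ Ioi 0))
    (hH1 : IntegrableOn (Function.uncurry fun x y => (1 - pT x) * x * g x y) (Ioi 0 ×ˢ Ioi 0))
    (hH2 : IntegrableOn (Function.uncurry fun x y => (1 - pT x) * x ^ 2 * g x y) (Ioi 0 ×ˢ Ioi 0)) :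
    (∫ x in Ioi 0, x ^ 2 * pT x * f x) + (∫ y in Ioc 0 r, ∫ x in Ioi 0, (1 - pT x) * x ^ 2 * g x y)
      ≤ (∫ x in Ioi 0, (x + c₁) ^ 2 * pT x * f x)
        + c ^ 2 * (∫ y in Ioi r, ∫ x in Ioi 0, (1 - pT x) * g x y)
        + ∫ y in Ioc 0 r, ∫ x in Ioi 0, (1 - pT x) * (x + c) ^ 2 * g x y := by
  have hsq : ∀ {a b : ℝ}, 0 ≤ a → 0 ≤ b → a ^ 2 ≤ (a + b) ^ 2 := fun ha hb =>
    pow_le_pow_left₀ ha (le_add_of_nonneg_right hb) 2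
  have hshort : ∫ x in Ioi 0, x ^ 2 * pT x * f x ≤ ∫ x in Ioi 0, (x + c₁) ^ 2 * pT x * f x := by
    refine setIntegral_mono_on hx2pf (((hx2pf.add (hxpf.const_mul (2 * c₁))).add
      (hpf.const_mul (c₁ ^ 2))).congr (ae_of_all _ fun x => by simp only [Pi.add_apply]; ring))
      measurableSet_Ioi fun x hx => ?_
    exact mul_le_mul_of_nonneg_right
      (mul_le_mul_of_nonneg_right (hsq (mem_Ioi.1 hx).le hc₁) (hp0 x)) (hf0 x)
  have hH2c : IntegrableOn (Function.uncurry fun x y => (1 - pT x) * (x + c) ^ 2 * g x y)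
      (Ioi 0 ×ˢ Ioi 0) :=
    ((hH2.add (hH1.const_mul (2 * c))).add (hH0.const_mul (c ^ 2))).congr
      (ae_of_all _ fun q => by simp only [Pi.add_apply, Function.uncurry_def]; ring)
  have hsub : Ioi (0 : ℝ) ×ˢ Ioc 0 r ⊆ Ioi 0 ×ˢ Ioi 0 := prod_mono subset_rfl Ioc_subset_Ioi_self
  have hlong := setIntegral_setIntegral_mono (hH2.mono_set hsub) (hH2c.mono_set hsub)
    measurableSet_Ioi measurableSet_Ioc fun x hx y _ => mul_le_mul_of_nonneg_right
      (mul_le_mul_of_nonneg_left (hsq (mem_Ioi.1 hx).le hc) (sub_nonneg.2 (hp1 x))) (hg0 x y)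
  have hcost : 0 ≤ c ^ 2 * ∫ y in Ioi r, ∫ x in Ioi 0, (1 - pT x) * g x y :=
    mul_nonneg (sq_nonneg c) (setIntegral_nonneg measurableSet_Ioi fun y _ =>
      setIntegral_nonneg measurableSet_Ioi fun x _ => mul_nonneg (sub_nonneg.2 (hp1 x)) (hg0 x y))
  linarith

theorem secondMoment_add_residual_nonneg (hp0 : ∀ x, 0 ≤ pT x) (hp1 : ∀ x, pT x ≤ 1)
    (hf0 : ∀ x, 0 ≤ f x) (hg0 : ∀ x y, 0 ≤ g x y) (r : ℝ) :
    0 ≤ (∫ x in Ioi 0, x ^ 2 * pT x * f x)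
      + (∫ y in Ioc 0 r, ∫ x in Ioi 0, (1 - pT x) * x ^ 2 * g x y)
      + ∫ t in Ioi r, ∫ x in Ioi (t - r), (1 - pT x) * g x t * (x - (t - r)) ^ 2 := by
  have h1p : ∀ x, 0 ≤ 1 - pT x := fun x => sub_nonneg.2 (hp1 x)
  refine add_nonneg (add_nonneg ?_ ?_) ?_
  · exact setIntegral_nonneg measurableSet_Ioi fun x _ =>
      mul_nonneg (mul_nonneg (sq_nonneg x) (hp0 x)) (hf0 x)
  · exact setIntegral_nonneg measurableSet_Ioc fun y _ => setIntegral_nonneg measurableSet_Ioi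
      fun x _ => mul_nonneg (mul_nonneg (h1p x) (sq_nonneg x)) (hg0 x y)
  · exact setIntegral_nonneg measurableSet_Ioi fun t _ => setIntegral_nonneg measurableSet_Ioi
      fun x _ => mul_nonneg (mul_nonneg (h1p x) (hg0 x t)) (sq_nonneg _)

end SkipPredict

theorem stmt_7_general
    (f pT : ℝ → ℝ) (g : ℝ → ℝ → ℝ) (lam c₁ c₂ r : ℝ)
    (hf_nonneg : ∀ x, 0 ≤ f x)
    (hf_int : IntegrableOn f (Ioi 0))
    (hf_mom1 : IntegrableOn (fun x => x * f x) (Ioi 0))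
    (hf_mom2 : IntegrableOn (fun x => x ^ 2 * f x) (Ioi 0))
    (hp_meas : Measurable pT) (hp0 : ∀ x, 0 ≤ pT x) (hp1 : ∀ x, pT x ≤ 1)
    (hg_nonneg : ∀ x y, 0 ≤ g x y)
    (hg_int0 : IntegrableOn (fun q : ℝ × ℝ => g q.1 q.2) ((Ioi (0:ℝ)) ×ˢ (Ioi (0:ℝ))))
    (hg_int1 : IntegrableOn (fun q : ℝ × ℝ => q.1 * g q.1 q.2) ((Ioi (0:ℝ)) ×ˢ (Ioi (0:ℝ))))
    (hg_int2 : IntegrableOn (fun q : ℝ × ℝ => q.1 ^ 2 * g q.1 q.2) ((Ioi (0:ℝ)) ×ˢ (Ioi (0:ℝ))))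
    (hlam : 0 < lam) (hc₁ : 0 ≤ c₁) (hc₂ : 0 ≤ c₂) (hr : 0 ≤ r)
    (ρext ρsrv aR : ℝ → ℝ) (MPLext MPLsrv : ℝ → ℝ → ℝ)
    (hρext : ∀ r, ρext r = lam * ((∫ x in Ioi (0:ℝ), x * pT x * f x) + (∫ y in Ioc (0:ℝ) r, ∫ x in Ioi (0:ℝ), (1 - pT x) * x * g x y)))
    (hρsrv : ∀ r, ρsrv r = lam * ((∫ x in Ioi (0:ℝ), (x + c₁) * pT x * f x)
      + (c₁ + c₂) * (∫ y in Ioi r, ∫ x in Ioi (0:ℝ), (1 - pT x) * g x y)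
      + (∫ y in Ioc (0:ℝ) r, ∫ x in Ioi (0:ℝ), (1 - pT x) * (x + (c₁ + c₂)) * g x y)))
    (haR : ∀ r, aR r = ∫ t in Ioi r, ∫ x in Ioi (t - r),
      (1 - pT x) * g x t * (x - (t - r)) ^ 2)
    (hstab : ρsrv r < 1)
    (hMPLext : ∀ xJ r, MPLext xJ r = lam / (2 * (1 - ρext r) ^ 2)
      * ((∫ x in Ioi (0:ℝ), x ^ 2 * pT x * f x) + (∫ y in Ioc (0:ℝ) r, ∫ x in Ioi (0:ℝ), (1 - pT x) * x ^ 2 * g x y) + aR r)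
      + ∫ u in Ioc (0:ℝ) xJ, 1 / (1 - ρext (max (r - u) 0)))
    (hMPLsrv : ∀ xJ r, MPLsrv xJ r = lam / (2 * (1 - ρsrv r) ^ 2)
      * ((∫ x in Ioi (0:ℝ), (x + c₁) ^ 2 * pT x * f x)
        + (c₁ + c₂) ^ 2 * (∫ y in Ioi r, ∫ x in Ioi (0:ℝ), (1 - pT x) * g x y)
        + (∫ y in Ioc (0:ℝ) r, ∫ x in Ioi (0:ℝ), (1 - pT x) * (x + (c₁ + c₂)) ^ 2 * g x y)
        + aR r)
      + ∫ u in Ioc (0:ℝ) xJ, 1 / (1 - ρsrv (max (r - u) 0)))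
 :
    ∀ xJ ≥ (0:ℝ), MPLext xJ r ≤ MPLsrv xJ r := by
  obtain ⟨hpf, hxpf, hx2pf⟩ :=
    integrableOn_short_moments hp_meas hp0 hp1 hf_int hf_mom1 hf_mom2
  obtain ⟨hH0, hH1, hH2⟩ :=
    integrableOn_long_moments hp_meas hp0 hp1 hg_int0 hg_int1 hg_int2
  obtain rfl : ρext = extLoad f pT g lam := funext hρext
  obtain rfl : ρsrv = srvLoad f pT g lam c₁ c₂ := funext hρsrv
  have hext_mono : Monotone (extLoad f pT g lam) := monotone_extLoad hlam.le hp1 hg_nonneg hH1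
  have hsrv_eq : ∀ t ≥ 0, srvLoad f pT g lam c₁ c₂ t
      = extLoad f pT g lam t + lam * meanPredictionCost f pT g c₁ c₂ :=
    fun t ht => srvLoad_eq_extLoad_add hpf hxpf hH0 hH1 ht
  have hcost := mul_nonneg hlam.le (meanPredictionCost_nonneg hc₁ hc₂ hp0 hp1 hf_nonneg hg_nonneg)
  intro xJ _
  rw [hMPLext, hMPLsrv]
  refine responseTime_le_of_load_le hlam.le hr (hext_mono.monotoneOn _) ?_ ?_ hstab ?_ ?_
  · intro a ha b hb hab
    rw [hsrv_eq a ha, hsrv_eq b hb]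
    linarith [hext_mono hab]
  · intro t ht
    rw [hsrv_eq t ht]
    linarith
  · rw [haR]
    exact secondMoment_add_residual_nonneg hp0 hp1 hf_nonneg hg_nonneg r
  · exact add_le_add_left (secondMoment_le hc₁ (add_nonneg hc₁ hc₂) hp0 hp1 hf_nonneg hg_nonneg
      hpf hxpf hx2pf hH0 hH1 hH2) _

theorem stmt_7
    (f pT : ℝ → ℝ) (g : ℝ → ℝ → ℝ) (lam c₁ c₂ r : ℝ)
    (hf_meas : Measurable f) (hf_nonneg : ∀ x, 0 ≤ f x)
    (hf_int : IntegrableOn f (Ioi 0))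
    (hf_one : (∫ x in Ioi (0:ℝ), f x) = 1)
    (hf_mom1 : IntegrableOn (fun x => x * f x) (Ioi 0))
    (hf_mom2 : IntegrableOn (fun x => x ^ 2 * f x) (Ioi 0))
    (hp_meas : Measurable pT) (hp0 : ∀ x, 0 ≤ pT x) (hp1 : ∀ x, pT x ≤ 1)
    (hg_meas : Measurable fun q : ℝ × ℝ => g q.1 q.2)
    (hg_nonneg : ∀ x y, 0 ≤ g x y)
    (hg_marg : ∀ x ≥ (0:ℝ), (∫ y in Ioi (0:ℝ), g x y) = f x)
    (hg_int0 : IntegrableOn (fun q : ℝ × ℝ => g q.1 q.2) ((Ioi (0:ℝ)) ×ˢ (Ioi (0:ℝ))))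
    (hg_int1 : IntegrableOn (fun q : ℝ × ℝ => q.1 * g q.1 q.2) ((Ioi (0:ℝ)) ×ˢ (Ioi (0:ℝ))))
    (hg_int2 : IntegrableOn (fun q : ℝ × ℝ => q.1 ^ 2 * g q.1 q.2) ((Ioi (0:ℝ)) ×ˢ (Ioi (0:ℝ))))
    (hlam : 0 < lam) (hc₁ : 0 ≤ c₁) (hc₂ : 0 ≤ c₂) (hr : 0 ≤ r)
    (ρext ρsrv aR : ℝ → ℝ) (MPLext MPLsrv : ℝ → ℝ → ℝ)
    (hρext : ∀ r, ρext r = lam * ((∫ x in Ioi (0:ℝ), x * pT x * f x) + (∫ y in Ioc (0:ℝ) r, ∫ x in Ioi (0:ℝ), (1 - pT x) * x * g x y)))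
    (hρsrv : ∀ r, ρsrv r = lam * ((∫ x in Ioi (0:ℝ), (x + c₁) * pT x * f x)
      + (c₁ + c₂) * (∫ y in Ioi r, ∫ x in Ioi (0:ℝ), (1 - pT x) * g x y)
      + (∫ y in Ioc (0:ℝ) r, ∫ x in Ioi (0:ℝ), (1 - pT x) * (x + (c₁ + c₂)) * g x y)))
    (haR : ∀ r, aR r = ∫ t in Ioi r, ∫ x in Ioi (t - r),
      (1 - pT x) * g x t * (x - (t - r)) ^ 2)
    (hstab : ρsrv r < 1)
    (hMPLext : ∀ xJ r, MPLext xJ r = lam / (2 * (1 - ρext r) ^ 2)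
      * ((∫ x in Ioi (0:ℝ), x ^ 2 * pT x * f x) + (∫ y in Ioc (0:ℝ) r, ∫ x in Ioi (0:ℝ), (1 - pT x) * x ^ 2 * g x y) + aR r)
      + ∫ u in Ioc (0:ℝ) xJ, 1 / (1 - ρext (max (r - u) 0)))
    (hMPLsrv : ∀ xJ r, MPLsrv xJ r = lam / (2 * (1 - ρsrv r) ^ 2)
      * ((∫ x in Ioi (0:ℝ), (x + c₁) ^ 2 * pT x * f x)
        + (c₁ + c₂) ^ 2 * (∫ y in Ioi r, ∫ x in Ioi (0:ℝ), (1 - pT x) * g x y)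
        + (∫ y in Ioc (0:ℝ) r, ∫ x in Ioi (0:ℝ), (1 - pT x) * (x + (c₁ + c₂)) ^ 2 * g x y)
        + aR r)
      + ∫ u in Ioc (0:ℝ) xJ, 1 / (1 - ρsrv (max (r - u) 0)))
 :
    ∀ xJ ≥ (0:ℝ), MPLext xJ r ≤ MPLsrv xJ r :=
  stmt_7_general f pT g lam c₁ c₂ r hf_nonneg hf_int hf_mom1 hf_mom2 hp_meas hp0 hp1 hg_nonneg
    hg_int0 hg_int1 hg_int2 hlam hc₁ hc₂ hr ρext ρsrv aR MPLext MPLsrv hρext hρsrv haR hstab hMPLext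
    hMPLsrv
end

section
/- Fix r ≥ 0 and c₂ ≥ 0 and assume the server-cost stability condition ρ''_r < 1. Then for every x_J ≥ 0 the SPRPT server-cost mean response time formula dominates the external-cost one: M^{SPRPT}_{ext}(x_J, r) ≤ M^{SPRPT}_{srv}(x_J, r). -/
open MeasureTheory Set Filter

theorem stmt_11
    (f : ℝ → ℝ) (g : ℝ → ℝ → ℝ) (lam c₂ r : ℝ)
    (hf_meas : Measurable f) (hf_nonneg : ∀ x, 0 ≤ f x)
    (hf_int : IntegrableOn f (Ioi 0))
    (hf_one : (∫ x in Ioi (0:ℝ), f x) = 1)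
    (hf_mom1 : IntegrableOn (fun x => x * f x) (Ioi 0))
    (hf_mom2 : IntegrableOn (fun x => x ^ 2 * f x) (Ioi 0))
    (hg_meas : Measurable fun q : ℝ × ℝ => g q.1 q.2)
    (hg_nonneg : ∀ x y, 0 ≤ g x y)
    (hg_marg : ∀ x ≥ (0:ℝ), (∫ y in Ioi (0:ℝ), g x y) = f x)
    (hg_int0 : IntegrableOn (fun q : ℝ × ℝ => g q.1 q.2) ((Ioi (0:ℝ)) ×ˢ (Ioi (0:ℝ))))
    (hg_int1 : IntegrableOn (fun q : ℝ × ℝ => q.1 * g q.1 q.2) ((Ioi (0:ℝ)) ×ˢ (Ioi (0:ℝ))))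
    (hg_int2 : IntegrableOn (fun q : ℝ × ℝ => q.1 ^ 2 * g q.1 q.2) ((Ioi (0:ℝ)) ×ˢ (Ioi (0:ℝ))))
    (hlam : 0 < lam) (hc₂ : 0 ≤ c₂) (hr : 0 ≤ r)
    (ρ' ρ'' A : ℝ → ℝ) (MsprptExt MsprptSrv : ℝ → ℝ → ℝ)
    (hρ' : ∀ r, ρ' r = lam * ∫ y in Ioc (0:ℝ) r, ∫ x in Ioi (0:ℝ), x * g x y)
    (hρ'' : ∀ r, ρ'' r = lam * (c₂ + ∫ y in Ioc (0:ℝ) r, ∫ x in Ioi (0:ℝ), x * g x y))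
    (hA : ∀ r, A r = ∫ t in Ioi r, ∫ x in Ioi (t - r), g x t * (x - (t - r)) ^ 2)
    (hMsprptExt : ∀ xJ r, MsprptExt xJ r = lam / (2 * (1 - ρ' r) ^ 2)
      * ((∫ y in Ioc (0:ℝ) r, ∫ x in Ioi (0:ℝ), x ^ 2 * g x y) + A r)
      + ∫ u in Ioc (0:ℝ) xJ, 1 / (1 - ρ' (max (r - u) 0)))
    (hMsprptSrv : ∀ xJ r, MsprptSrv xJ r = lam / (2 * (1 - ρ'' r) ^ 2)
      * (c₂ ^ 2 * (∫ y in Ioi r, ∫ x in Ioi (0:ℝ), g x y)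
        + (∫ y in Ioc (0:ℝ) r, ∫ x in Ioi (0:ℝ), (c₂ + x) ^ 2 * g x y) + A r)
      + ∫ u in Ioc (0:ℝ) xJ, 1 / (1 - ρ'' (max (r - u) 0)))
    (hstab : ρ'' r < 1) :
    ∀ xJ ≥ (0:ℝ), MsprptExt xJ r ≤ MsprptSrv xJ r := by
  classical
  intro xJ hxJ
  -- notation
  set F : ℝ → ℝ := fun y => ∫ x in Ioi (0:ℝ), x * g x y with hFdef
  set φ : ℝ → ℝ := fun m => ∫ y in Ioc (0:ℝ) m, F y with hφdef
  have hF_nonneg : ∀ y, 0 ≤ F y := fun y =>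
    setIntegral_nonneg measurableSet_Ioi fun x hx =>
      mul_nonneg (le_of_lt hx) (hg_nonneg x y)
  -- integrability on product measure form
  have hmeq : ((volume : Measure ℝ).restrict (Ioi 0)).prod ((volume : Measure ℝ).restrict (Ioi 0))
      = (volume : Measure (ℝ × ℝ)).restrict ((Ioi (0:ℝ)) ×ˢ (Ioi (0:ℝ))) := by
    rw [Measure.prod_restrict, ← Measure.volume_eq_prod]
  have hg1' : Integrable (fun q : ℝ × ℝ => q.1 * g q.1 q.2)
      (((volume : Measure ℝ).restrict (Ioi 0)).prod ((volume : Measure ℝ).restrict (Ioi 0))) := by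
    rw [hmeq]; exact hg_int1
  have hF_int : IntegrableOn F (Ioi 0) := by
    have := hg1'.integral_prod_right
    exact this
  -- monotonicity of φ
  have hφ_mono : Monotone φ := by
    intro m m' hm
    exact setIntegral_mono_set (hF_int.mono_set Ioc_subset_Ioi_self)
      (Filter.Eventually.of_forall fun y => hF_nonneg y)
      (HasSubset.Subset.eventuallyLE (Ioc_subset_Ioc_right hm))
  have hφ_nonneg : ∀ m, 0 ≤ φ m := fun m =>
    setIntegral_nonneg measurableSet_Ioc fun y _ => hF_nonneg y
  have hρ'eq : ∀ m, ρ' m = lam * φ m := hρ'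
  have hρ''eq : ∀ m, ρ'' m = lam * (c₂ + φ m) := hρ''
  have hρ'le : ∀ m, ρ' m ≤ ρ'' m := by
    intro m; rw [hρ'eq, hρ''eq]; nlinarith [hφ_nonneg m]
  -- key positivity
  have hD : 0 < 1 - ρ'' r := by linarith
  have hD' : 0 < 1 - ρ' r := by have := hρ'le r; linarith
  -- ρ'' at max (r-u) 0 for u in Ioc 0 xJ is ≤ ρ'' r
  have hmax_le : ∀ u ∈ Ioc (0:ℝ) xJ, max (r - u) 0 ≤ r := by
    intro u hu
    exact max_le (by linarith [hu.1]) hr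
  have hρ''max : ∀ u ∈ Ioc (0:ℝ) xJ, ρ'' (max (r - u) 0) ≤ ρ'' r := by
    intro u hu
    rw [hρ''eq, hρ''eq]
    have := hφ_mono (hmax_le u hu)
    nlinarith
  have hρ'max_nonneg : ∀ u : ℝ, 0 ≤ ρ' (max (r - u) 0) := by
    intro u; rw [hρ'eq]; exact mul_nonneg hlam.le (hφ_nonneg _)
  -- pointwise inequality of integrands
  have hpt : ∀ u ∈ Ioc (0:ℝ) xJ,
      1 / (1 - ρ' (max (r - u) 0)) ≤ 1 / (1 - ρ'' (max (r - u) 0)) := by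
    intro u hu
    have h1 : 0 < 1 - ρ'' (max (r - u) 0) := by
      have := hρ''max u hu; linarith
    exact one_div_le_one_div_of_le h1 (by have := hρ'le (max (r - u) 0); linarith)
  -- measurability and integrability of the two integrands
  have hφ_meas : Measurable φ := hφ_mono.measurable
  have hmmeas : Measurable fun u : ℝ => max (r - u) 0 :=
    (measurable_const.sub measurable_id).max measurable_const
  have hmeas' : Measurable fun u : ℝ => 1 / (1 - ρ' (max (r - u) 0)) := by
    have : (fun u : ℝ => 1 / (1 - ρ' (max (r - u) 0)))
        = fun u : ℝ => 1 / (1 - lam * φ (max (r - u) 0)) := by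
      funext u; rw [hρ'eq]
    rw [this]
    exact measurable_const.div (measurable_const.sub
      (measurable_const.mul (hφ_meas.comp hmmeas)))
  have hmeas'' : Measurable fun u : ℝ => 1 / (1 - ρ'' (max (r - u) 0)) := by
    have : (fun u : ℝ => 1 / (1 - ρ'' (max (r - u) 0)))
        = fun u : ℝ => 1 / (1 - lam * (c₂ + φ (max (r - u) 0))) := by
      funext u; rw [hρ''eq]
    rw [this]
    exact measurable_const.div (measurable_const.sub
      (measurable_const.mul (measurable_const.add (hφ_meas.comp hmmeas))))
  set C : ℝ := 1 / (1 - ρ'' r) with hCdef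
  have hC1 : 1 ≤ C := by
    rw [hCdef, le_div_iff₀ hD]
    have : 0 ≤ ρ'' r := by
      rw [hρ''eq]; exact mul_nonneg hlam.le (by linarith [hφ_nonneg r])
    linarith
  have hbound' : ∀ u ∈ Ioc (0:ℝ) xJ, ‖1 / (1 - ρ' (max (r - u) 0))‖ ≤ C := by
    intro u hu
    have h2 : 0 < 1 - ρ'' (max (r - u) 0) := by have := hρ''max u hu; linarith
    have h1 : 0 < 1 - ρ' (max (r - u) 0) := by
      have := hρ'le (max (r - u) 0); linarith
    rw [Real.norm_eq_abs, abs_of_pos (by positivity)]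
    calc 1 / (1 - ρ' (max (r - u) 0)) ≤ 1 / (1 - ρ'' (max (r - u) 0)) := hpt u hu
      _ ≤ C := one_div_le_one_div_of_le hD (by linarith [hρ''max u hu])
  have hbound'' : ∀ u ∈ Ioc (0:ℝ) xJ, ‖1 / (1 - ρ'' (max (r - u) 0))‖ ≤ C := by
    intro u hu
    have h2 : 0 < 1 - ρ'' (max (r - u) 0) := by have := hρ''max u hu; linarith
    rw [Real.norm_eq_abs, abs_of_pos (by positivity)]
    exact one_div_le_one_div_of_le hD (by linarith [hρ''max u hu])
  have hIoc_fin : (volume : Measure ℝ) (Ioc 0 xJ) ≠ ⊤ := by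
    simp [Real.volume_Ioc]
  have hint' : IntegrableOn (fun u : ℝ => 1 / (1 - ρ' (max (r - u) 0))) (Ioc 0 xJ) :=
    Measure.integrableOn_of_bounded hIoc_fin hmeas'.aestronglyMeasurable
      ((ae_restrict_iff' measurableSet_Ioc).mpr (Filter.Eventually.of_forall hbound'))
  have hint'' : IntegrableOn (fun u : ℝ => 1 / (1 - ρ'' (max (r - u) 0))) (Ioc 0 xJ) :=
    Measure.integrableOn_of_bounded hIoc_fin hmeas''.aestronglyMeasurable
      ((ae_restrict_iff' measurableSet_Ioc).mpr (Filter.Eventually.of_forall hbound''))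
  have hterm2 : (∫ u in Ioc (0:ℝ) xJ, 1 / (1 - ρ' (max (r - u) 0)))
      ≤ ∫ u in Ioc (0:ℝ) xJ, 1 / (1 - ρ'' (max (r - u) 0)) :=
    setIntegral_mono_on hint' hint'' measurableSet_Ioc hpt
  -- first term
  -- coefficients
  have hcoef : lam / (2 * (1 - ρ' r) ^ 2) ≤ lam / (2 * (1 - ρ'' r) ^ 2) := by
    apply div_le_div_of_nonneg_left hlam.le (by positivity)
    have : 1 - ρ'' r ≤ 1 - ρ' r := by have := hρ'le r; linarith
    nlinarith
  -- nonnegativity of A r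
  have hA_nonneg : 0 ≤ A r := by
    rw [hA]
    refine setIntegral_nonneg measurableSet_Ioi fun t _ => ?_
    exact setIntegral_nonneg measurableSet_Ioi fun x _ =>
      mul_nonneg (hg_nonneg x t) (sq_nonneg _)
  -- second moment comparison: ∫ x^2 g ≤ ∫ (c₂+x)^2 g
  have hg2' : Integrable (fun q : ℝ × ℝ => q.1 ^ 2 * g q.1 q.2)
      (((volume : Measure ℝ).restrict (Ioi 0)).prod ((volume : Measure ℝ).restrict (Ioi 0))) := by
    rw [hmeq]; exact hg_int2
  have hg0' : Integrable (fun q : ℝ × ℝ => g q.1 q.2)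
      (((volume : Measure ℝ).restrict (Ioi 0)).prod ((volume : Measure ℝ).restrict (Ioi 0))) := by
    rw [hmeq]; exact hg_int0
  have hsum_eq : (fun q : ℝ × ℝ => (c₂ + q.1) ^ 2 * g q.1 q.2)
      = fun q : ℝ × ℝ => c₂ ^ 2 * g q.1 q.2 + 2 * c₂ * (q.1 * g q.1 q.2) + q.1 ^ 2 * g q.1 q.2 := by
    funext q; ring
  have hgc' : Integrable (fun q : ℝ × ℝ => (c₂ + q.1) ^ 2 * g q.1 q.2)
      (((volume : Measure ℝ).restrict (Ioi 0)).prod ((volume : Measure ℝ).restrict (Ioi 0))) := by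
    rw [hsum_eq]
    exact ((hg0'.const_mul _).add (hg1'.const_mul _)).add hg2'
  -- a.e. sections integrable, hence a.e. pointwise comparison of inner integrals
  have hae : ∀ᵐ y ∂((volume : Measure ℝ).restrict (Ioi 0)),
      (∫ x in Ioi (0:ℝ), x ^ 2 * g x y) ≤ ∫ x in Ioi (0:ℝ), (c₂ + x) ^ 2 * g x y := by
    filter_upwards [hg2'.prod_left_ae, hgc'.prod_left_ae] with y h2 hc
    refine setIntegral_mono_on h2 hc measurableSet_Ioi fun x hx => ?_
    have hx0 : (0:ℝ) ≤ x := le_of_lt hx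
    have hsq : x ^ 2 ≤ (c₂ + x) ^ 2 := by nlinarith
    exact mul_le_mul_of_nonneg_right hsq (hg_nonneg x y)
  have hG2_int : IntegrableOn (fun y => ∫ x in Ioi (0:ℝ), x ^ 2 * g x y) (Ioi 0) :=
    hg2'.integral_prod_right
  have hH_int : IntegrableOn (fun y => ∫ x in Ioi (0:ℝ), (c₂ + x) ^ 2 * g x y) (Ioi 0) :=
    hgc'.integral_prod_right
  have hmom : (∫ y in Ioc (0:ℝ) r, ∫ x in Ioi (0:ℝ), x ^ 2 * g x y)
      ≤ ∫ y in Ioc (0:ℝ) r, ∫ x in Ioi (0:ℝ), (c₂ + x) ^ 2 * g x y := by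
    refine integral_mono_ae (hG2_int.mono_set Ioc_subset_Ioi_self)
      (hH_int.mono_set Ioc_subset_Ioi_self) ?_
    exact ae_restrict_of_ae_restrict_of_subset Ioc_subset_Ioi_self hae
  -- tail term nonneg
  have htail_nonneg : 0 ≤ c₂ ^ 2 * ∫ y in Ioi r, ∫ x in Ioi (0:ℝ), g x y := by
    refine mul_nonneg (sq_nonneg _) ?_
    refine setIntegral_nonneg measurableSet_Ioi fun y _ => ?_
    exact setIntegral_nonneg measurableSet_Ioi fun x _ => hg_nonneg x y
  have hb_nonneg : 0 ≤ (∫ y in Ioc (0:ℝ) r, ∫ x in Ioi (0:ℝ), x ^ 2 * g x y) + A r := by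
    have : 0 ≤ ∫ y in Ioc (0:ℝ) r, ∫ x in Ioi (0:ℝ), x ^ 2 * g x y :=
      setIntegral_nonneg measurableSet_Ioc fun y _ =>
        setIntegral_nonneg measurableSet_Ioi fun x hx =>
          mul_nonneg (by positivity) (hg_nonneg x y)
    linarith
  have hterm1 : lam / (2 * (1 - ρ' r) ^ 2)
      * ((∫ y in Ioc (0:ℝ) r, ∫ x in Ioi (0:ℝ), x ^ 2 * g x y) + A r)
      ≤ lam / (2 * (1 - ρ'' r) ^ 2)
      * (c₂ ^ 2 * (∫ y in Ioi r, ∫ x in Ioi (0:ℝ), g x y)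
        + (∫ y in Ioc (0:ℝ) r, ∫ x in Ioi (0:ℝ), (c₂ + x) ^ 2 * g x y) + A r) := by
    refine mul_le_mul hcoef (by linarith) hb_nonneg (by positivity)
  rw [hMsprptExt, hMsprptSrv]
  exact add_le_add hterm1 hterm2
end

section
/- Assume the stability condition ρ_{c₁} < 1 (which implies ρ < 1 and ρ^{srv}_{new} < 1 and ρ^{ext}_{new} < 1). Then for every x_J ≥ 0 the 1bit server-cost mean response time formula for predicted long jobs dominates the external-cost one: M^{1bit,PL}_{ext}(x_J) ≤ M^{1bit,PL}_{srv}(x_J); and if c₁ = 0 the two formulas are equal. -/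
open MeasureTheory Set Filter

theorem stmt_12
    (f pT : ℝ → ℝ) (lam c₁ : ℝ)
    (hf_meas : Measurable f) (hf_nonneg : ∀ x, 0 ≤ f x)
    (hf_int : IntegrableOn f (Ioi 0))
    (hf_one : (∫ x in Ioi (0:ℝ), f x) = 1)
    (hf_mom1 : IntegrableOn (fun x => x * f x) (Ioi 0))
    (hf_mom2 : IntegrableOn (fun x => x ^ 2 * f x) (Ioi 0))
    (hp_meas : Measurable pT) (hp0 : ∀ x, 0 ≤ pT x) (hp1 : ∀ x, pT x ≤ 1)
    (hlam : 0 < lam) (hc₁ : 0 ≤ c₁)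
    (ρ ES2 ρextNew ρc₁ ρsrvNew : ℝ) (MPLext MPLsrv : ℝ → ℝ)
    (hρ : ρ = lam * ∫ x in Ioi (0:ℝ), x * f x)
    (hES2 : ES2 = ∫ x in Ioi (0:ℝ), x ^ 2 * f x)
    (hρextNew : ρextNew = lam * ∫ x in Ioi (0:ℝ), pT x * x * f x)
    (hρc₁ : ρc₁ = lam * ∫ x in Ioi (0:ℝ), (x + c₁) * f x)
    (hρsrvNew : ρsrvNew = lam * (c₁ + ∫ x in Ioi (0:ℝ), pT x * x * f x))
    (hstab : ρc₁ < 1)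
    (hMPLext : ∀ xJ, MPLext xJ =
      lam * ES2 / (2 * (1 - ρ) * (1 - ρextNew)) + xJ / (1 - ρextNew))
    (hMPLsrv : ∀ xJ, MPLsrv xJ =
      lam * (∫ x in Ioi (0:ℝ), (x + c₁) ^ 2 * f x) / (2 * (1 - ρc₁) * (1 - ρsrvNew))
      + xJ / (1 - ρsrvNew)) :
    (∀ xJ ≥ (0:ℝ), MPLext xJ ≤ MPLsrv xJ) ∧
    (c₁ = 0 → ∀ xJ ≥ (0:ℝ), MPLext xJ = MPLsrv xJ) := by

  -- integrability facts
  have h_int_p : IntegrableOn (fun x => pT x * x * f x) (Ioi 0) := by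
    refine hf_mom1.mono' (((hp_meas.mul measurable_id).mul hf_meas).aestronglyMeasurable) ?_
    filter_upwards [ae_restrict_mem measurableSet_Ioi] with x hx
    have hx0 : (0:ℝ) < x := hx
    have h0 : 0 ≤ pT x * x * f x :=
      mul_nonneg (mul_nonneg (hp0 x) hx0.le) (hf_nonneg x)
    have : pT x * x * f x ≤ x * f x := by
      nlinarith [mul_nonneg (mul_nonneg (sub_nonneg.mpr (hp1 x)) hx0.le) (hf_nonneg x)]
    rw [Real.norm_eq_abs, abs_of_nonneg h0]
    exact this
  have h_int_c : IntegrableOn (fun x => (x + c₁) * f x) (Ioi 0) := by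
    have h : (fun x => (x + c₁) * f x) = fun x => x * f x + c₁ * f x := by
      funext x; ring
    rw [h]; exact hf_mom1.add (hf_int.const_mul c₁)
  have h_int_c2 : IntegrableOn (fun x => (x + c₁) ^ 2 * f x) (Ioi 0) := by
    have h : (fun x => (x + c₁) ^ 2 * f x)
        = fun x => x ^ 2 * f x + (2 * c₁) * (x * f x) + c₁ ^ 2 * f x := by
      funext x; ring
    rw [h]; exact (hf_mom2.add (hf_mom1.const_mul _)).add (hf_int.const_mul _)
  -- integral facts
  have hIp_nonneg : 0 ≤ ∫ x in Ioi (0:ℝ), pT x * x * f x :=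
    setIntegral_nonneg measurableSet_Ioi fun x hx =>
      mul_nonneg (mul_nonneg (hp0 x) (le_of_lt hx)) (hf_nonneg x)
  have hI2_nonneg : 0 ≤ ∫ x in Ioi (0:ℝ), x ^ 2 * f x :=
    setIntegral_nonneg measurableSet_Ioi fun x _ =>
      mul_nonneg (sq_nonneg x) (hf_nonneg x)
  have hIpI1 : (∫ x in Ioi (0:ℝ), pT x * x * f x) ≤ ∫ x in Ioi (0:ℝ), x * f x := by
    refine setIntegral_mono_on h_int_p hf_mom1 measurableSet_Ioi fun x hx => ?_
    have hx0 : (0:ℝ) < x := hx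
    nlinarith [mul_nonneg (mul_nonneg (sub_nonneg.mpr (hp1 x)) hx0.le) (hf_nonneg x)]
  have hI2Ic2 : (∫ x in Ioi (0:ℝ), x ^ 2 * f x) ≤ ∫ x in Ioi (0:ℝ), (x + c₁) ^ 2 * f x := by
    refine setIntegral_mono_on hf_mom2 h_int_c2 measurableSet_Ioi fun x hx => ?_
    have hx0 : (0:ℝ) < x := hx
    nlinarith [mul_nonneg (by nlinarith [mul_nonneg hc₁ hx0.le, sq_nonneg c₁] :
      (0:ℝ) ≤ 2 * c₁ * x + c₁ ^ 2) (hf_nonneg x)]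
  have hIc : (∫ x in Ioi (0:ℝ), (x + c₁) * f x)
      = (∫ x in Ioi (0:ℝ), x * f x) + c₁ := by
    have h : (fun x => (x + c₁) * f x) = fun x => x * f x + c₁ * f x := by
      funext x; ring
    rw [h, integral_add hf_mom1 (hf_int.const_mul c₁), integral_const_mul, hf_one, mul_one]
  -- rho relations
  have hρc₁' : ρc₁ = ρ + lam * c₁ := by rw [hρc₁, hIc, hρ]; ring
  have hsrv' : ρsrvNew = ρextNew + lam * c₁ := by rw [hρsrvNew, hρextNew]; ring
  have hext_nonneg : 0 ≤ ρextNew := by rw [hρextNew]; positivity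
  have hext_le_ρ : ρextNew ≤ ρ := by
    rw [hρextNew, hρ]; exact mul_le_mul_of_nonneg_left hIpI1 hlam.le
  have hρ_le : ρ ≤ ρc₁ := by rw [hρc₁']; nlinarith
  have hsrv_le : ρsrvNew ≤ ρc₁ := by rw [hρc₁', hsrv']; linarith
  have hext_le_srv : ρextNew ≤ ρsrvNew := by rw [hsrv']; nlinarith
  have hc1pos : 0 < 1 - ρc₁ := by linarith
  have hρpos : 0 < 1 - ρ := by linarith
  have hsrvpos : 0 < 1 - ρsrvNew := by linarith
  have hextpos : 0 < 1 - ρextNew := by linarith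
  constructor
  · intro xJ hxJ
    rw [hMPLext xJ, hMPLsrv xJ]
    have h1 : lam * ES2 / (2 * (1 - ρ) * (1 - ρextNew))
        ≤ lam * (∫ x in Ioi (0:ℝ), (x + c₁) ^ 2 * f x)
          / (2 * (1 - ρc₁) * (1 - ρsrvNew)) := by
      apply div_le_div₀
      · rw [hES2] at *; nlinarith
      · rw [hES2]; exact mul_le_mul_of_nonneg_left hI2Ic2 hlam.le
      · positivity
      · have h2 : (1 - ρc₁) * (1 - ρsrvNew) ≤ (1 - ρ) * (1 - ρextNew) := by
          nlinarith
        nlinarith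
    have h2 : xJ / (1 - ρextNew) ≤ xJ / (1 - ρsrvNew) :=
      div_le_div_of_nonneg_left hxJ hsrvpos (by linarith)
    linarith
  · intro hc0 xJ _
    subst hc0
    rw [hMPLext xJ, hMPLsrv xJ, hρc₁', hsrv']
    simp [hES2]
end

section
/- For every r ≥ 0, the recycled-work term satisfies a(r) ≤ E[S'_{≥T}²] − E[S'_{≥T,r}²]; consequently the delay numerator of the SkipPredict external-cost formula is bounded by the second moment of the service time: E[S'_{<T}²] + E[S'_{≥T,r}²] + a(r) ≤ ∫₀^∞ x²·f(x) dx. -/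
open MeasureTheory Set Filter

theorem stmt_18
    (f pT : ℝ → ℝ) (g : ℝ → ℝ → ℝ)
    (hf_meas : Measurable f) (hf_nonneg : ∀ x, 0 ≤ f x)
    (hf_int : IntegrableOn f (Ioi 0))
    (hf_one : (∫ x in Ioi (0:ℝ), f x) = 1)
    (hf_mom1 : IntegrableOn (fun x => x * f x) (Ioi 0))
    (hf_mom2 : IntegrableOn (fun x => x ^ 2 * f x) (Ioi 0))
    (hp_meas : Measurable pT) (hp0 : ∀ x, 0 ≤ pT x) (hp1 : ∀ x, pT x ≤ 1)
    (hg_meas : Measurable fun q : ℝ × ℝ => g q.1 q.2)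
    (hg_nonneg : ∀ x y, 0 ≤ g x y)
    (hg_marg : ∀ x ≥ (0:ℝ), (∫ y in Ioi (0:ℝ), g x y) = f x)
    (hg_int0 : IntegrableOn (fun q : ℝ × ℝ => g q.1 q.2) ((Ioi (0:ℝ)) ×ˢ (Ioi (0:ℝ))))
    (hg_int1 : IntegrableOn (fun q : ℝ × ℝ => q.1 * g q.1 q.2) ((Ioi (0:ℝ)) ×ˢ (Ioi (0:ℝ))))
    (hg_int2 : IntegrableOn (fun q : ℝ × ℝ => q.1 ^ 2 * g q.1 q.2) ((Ioi (0:ℝ)) ×ˢ (Ioi (0:ℝ))))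
    (aR Sge2R : ℝ → ℝ)
    (haR : ∀ r, aR r = ∫ t in Ioi r, ∫ x in Ioi (t - r),
      (1 - pT x) * g x t * (x - (t - r)) ^ 2)
    (hSge2R : ∀ r, Sge2R r = (∫ y in Ioc (0:ℝ) r, ∫ x in Ioi (0:ℝ), (1 - pT x) * x ^ 2 * g x y)) :
    ∀ r ≥ (0:ℝ), aR r ≤ (∫ x in Ioi (0:ℝ), x ^ 2 * (1 - pT x) * f x) - Sge2R r ∧
      (∫ x in Ioi (0:ℝ), x ^ 2 * pT x * f x) + Sge2R r + aR r ≤ ∫ x in Ioi (0:ℝ), x ^ 2 * f x := by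
  intro r hr
  set h : ℝ → ℝ → ℝ := fun x y => (1 - pT x) * x ^ 2 * g x y with hh_def
  have hh_meas : Measurable fun q : ℝ × ℝ => h q.1 q.2 := by
    apply Measurable.mul
    · exact ((measurable_const.sub (hp_meas.comp measurable_fst)).mul
        ((measurable_fst.pow measurable_const)))
    · exact hg_meas
  have hh_nonneg : ∀ x y, 0 ≤ h x y := fun x y =>
    mul_nonneg (mul_nonneg (by linarith [hp1 x]) (sq_nonneg x)) (hg_nonneg x y)
  -- integrability of h on the product set
  have hh_int : IntegrableOn (fun q : ℝ × ℝ => h q.1 q.2) ((Ioi (0:ℝ)) ×ˢ (Ioi (0:ℝ))) := by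
    refine hg_int2.mono' hh_meas.aestronglyMeasurable.restrict ?_
    refine Eventually.of_forall fun q => ?_
    have : (0:ℝ) ≤ h q.1 q.2 := hh_nonneg _ _
    rw [Real.norm_eq_abs, abs_of_nonneg this]
    have h1 : (1 - pT q.1) ≤ 1 := by linarith [hp0 q.1]
    have h2 : (0:ℝ) ≤ q.1 ^ 2 * g q.1 q.2 := mul_nonneg (sq_nonneg _) (hg_nonneg _ _)
    calc (1 - pT q.1) * q.1 ^ 2 * g q.1 q.2 = (1 - pT q.1) * (q.1 ^ 2 * g q.1 q.2) := by ring
      _ ≤ 1 * (q.1 ^ 2 * g q.1 q.2) := mul_le_mul_of_nonneg_right h1 h2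
      _ = q.1 ^ 2 * g q.1 q.2 := one_mul _
  have hh_prod : Integrable (fun q : ℝ × ℝ => h q.1 q.2)
      ((volume.restrict (Ioi (0:ℝ))).prod (volume.restrict (Ioi (0:ℝ)))) := by
    rw [Measure.prod_restrict]; exact hh_int
  -- G y = inner integral in x
  set G : ℝ → ℝ := fun y => ∫ x in Ioi (0:ℝ), h x y with hG_def
  have hG_int : IntegrableOn G (Ioi (0:ℝ)) := hh_prod.integral_prod_right
  have hG_nonneg : ∀ y, 0 ≤ G y := fun y =>
    setIntegral_nonneg measurableSet_Ioi fun x _ => hh_nonneg x y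
  -- a.e. integrability in x
  have hae : ∀ᵐ y ∂(volume.restrict (Ioi (0:ℝ))),
      Integrable (fun x => h x y) (volume.restrict (Ioi (0:ℝ))) := hh_prod.prod_left_ae
  -- Step A: second moment of long jobs = ∫ y > 0, G y
  have stepA : (∫ x in Ioi (0:ℝ), x ^ 2 * (1 - pT x) * f x) = ∫ y in Ioi (0:ℝ), G y := by
    have e1 : (∫ x in Ioi (0:ℝ), x ^ 2 * (1 - pT x) * f x)
        = ∫ x in Ioi (0:ℝ), ∫ y in Ioi (0:ℝ), h x y := by
      refine setIntegral_congr_fun measurableSet_Ioi fun x hx => ?_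
      have : (∫ y in Ioi (0:ℝ), h x y)
          = ((1 - pT x) * x ^ 2) * ∫ y in Ioi (0:ℝ), g x y := by
        simp only [hh_def]
        rw [← integral_const_mul]
      rw [this, hg_marg x (le_of_lt hx)]; ring
    rw [e1]
    exact integral_integral_swap hh_prod
  -- split Ioi 0 = Ioc 0 r ∪ Ioi r
  have hsplit : (∫ y in Ioi (0:ℝ), G y)
      = (∫ y in Ioc (0:ℝ) r, G y) + ∫ y in Ioi r, G y := by
    rw [← Ioc_union_Ioi_eq_Ioi hr]
    rw [setIntegral_union (Ioc_disjoint_Ioi le_rfl) measurableSet_Ioi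
      (hG_int.mono_set Ioc_subset_Ioi_self) (hG_int.mono_set (Ioi_subset_Ioi hr))]
  have hS_eq : Sge2R r = ∫ y in Ioc (0:ℝ) r, G y := hSge2R r
  -- Step D: aR r ≤ ∫ y in Ioi r, G y
  have hGr_int : IntegrableOn G (Ioi r) := hG_int.mono_set (Ioi_subset_Ioi hr)
  have hae_r : ∀ᵐ y ∂(volume.restrict (Ioi r)),
      Integrable (fun x => h x y) (volume.restrict (Ioi (0:ℝ))) :=
    ae_restrict_of_ae_restrict_of_subset (Ioi_subset_Ioi hr) hae
  have stepD : aR r ≤ ∫ y in Ioi r, G y := by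
    rw [haR r]
    refine integral_mono_of_nonneg ?_ hGr_int ?_
    · refine Eventually.of_forall fun t => ?_
      exact setIntegral_nonneg measurableSet_Ioi fun x _ =>
        mul_nonneg (mul_nonneg (by linarith [hp1 x]) (hg_nonneg x t)) (sq_nonneg _)
    · filter_upwards [hae_r, ae_restrict_mem measurableSet_Ioi] with t hti htr
      have htr0 : 0 ≤ t - r := by simp only [mem_Ioi] at htr; linarith
      -- bound on Ioi (t - r)
      have step1 : (∫ x in Ioi (t - r), (1 - pT x) * g x t * (x - (t - r)) ^ 2)
          ≤ ∫ x in Ioi (t - r), h x t := by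
        refine integral_mono_of_nonneg ?_ (IntegrableOn.mono_set hti (Ioi_subset_Ioi htr0)) ?_
        · exact Eventually.of_forall fun x =>
            mul_nonneg (mul_nonneg (by linarith [hp1 x]) (hg_nonneg x t)) (sq_nonneg _)
        · filter_upwards [ae_restrict_mem measurableSet_Ioi] with x hx
          simp only [mem_Ioi] at hx
          have h1 : (x - (t - r)) ^ 2 ≤ x ^ 2 := by nlinarith
          have h2 : (0:ℝ) ≤ (1 - pT x) * g x t :=
            mul_nonneg (by linarith [hp1 x]) (hg_nonneg x t)
          calc (1 - pT x) * g x t * (x - (t - r)) ^ 2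
              ≤ (1 - pT x) * g x t * x ^ 2 := mul_le_mul_of_nonneg_left h1 h2
            _ = h x t := by simp only [hh_def]; ring
      have step2 : (∫ x in Ioi (t - r), h x t) ≤ ∫ x in Ioi (0:ℝ), h x t := by
        refine setIntegral_mono_set hti ?_ (HasSubset.Subset.eventuallyLE (Ioi_subset_Ioi htr0))
        exact Eventually.of_forall fun x => hh_nonneg x t
      exact le_trans step1 step2
  -- first inequality
  have first : aR r ≤ (∫ x in Ioi (0:ℝ), x ^ 2 * (1 - pT x) * f x) - Sge2R r := by
    rw [stepA, hsplit, hS_eq]; linarith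
  refine ⟨first, ?_⟩
  -- second inequality
  have I1 : IntegrableOn (fun x => x ^ 2 * pT x * f x) (Ioi (0:ℝ)) := by
    refine hf_mom2.mono' ?_ ?_
    · exact (((measurable_id.pow measurable_const).mul hp_meas).mul hf_meas).aestronglyMeasurable.restrict
    · refine Eventually.of_forall fun x => ?_
      have hx : (0:ℝ) ≤ x ^ 2 * pT x * f x :=
        mul_nonneg (mul_nonneg (sq_nonneg x) (hp0 x)) (hf_nonneg x)
      rw [Real.norm_eq_abs, abs_of_nonneg hx]
      have h2 : (0:ℝ) ≤ x ^ 2 * f x := mul_nonneg (sq_nonneg x) (hf_nonneg x)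
      calc x ^ 2 * pT x * f x = pT x * (x ^ 2 * f x) := by ring
        _ ≤ 1 * (x ^ 2 * f x) := mul_le_mul_of_nonneg_right (hp1 x) h2
        _ = x ^ 2 * f x := one_mul _
  have I2 : IntegrableOn (fun x => x ^ 2 * (1 - pT x) * f x) (Ioi (0:ℝ)) := by
    refine hf_mom2.mono' ?_ ?_
    · exact (((measurable_id.pow measurable_const).mul
        (measurable_const.sub hp_meas)).mul hf_meas).aestronglyMeasurable.restrict
    · refine Eventually.of_forall fun x => ?_
      have hx : (0:ℝ) ≤ x ^ 2 * (1 - pT x) * f x :=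
        mul_nonneg (mul_nonneg (sq_nonneg x) (by linarith [hp1 x])) (hf_nonneg x)
      rw [Real.norm_eq_abs, abs_of_nonneg hx]
      have h2 : (0:ℝ) ≤ x ^ 2 * f x := mul_nonneg (sq_nonneg x) (hf_nonneg x)
      calc x ^ 2 * (1 - pT x) * f x = (1 - pT x) * (x ^ 2 * f x) := by ring
        _ ≤ 1 * (x ^ 2 * f x) := mul_le_mul_of_nonneg_right (by linarith [hp0 x]) h2
        _ = x ^ 2 * f x := one_mul _
  have hsum : (∫ x in Ioi (0:ℝ), x ^ 2 * pT x * f x)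
      + (∫ x in Ioi (0:ℝ), x ^ 2 * (1 - pT x) * f x) = ∫ x in Ioi (0:ℝ), x ^ 2 * f x := by
    rw [← integral_add I1 I2]
    refine setIntegral_congr_fun measurableSet_Ioi fun x _ => ?_
    ring
  linarith
end
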